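/- Suppose f is a permutation of S_d, a_0, b_0 ∈ S_d satisfy f(a_0) = b_0, and a is drawn uniformly from S_{d-1} while s ∈ {0,1} is an independent bit with P(s=0) = 1/d. Define a_t = a_0 if s = 0 and a_t = r_{a_0}(a) if s = 1, and b_t = b_0 if s = 0 and b_t = r_{b_0}(g(a)) if s = 1 (with g, r_{a_0}, r_{b_0} as in the construction). Then the pair (a_t, b_t) is uniformly distributed over the d pairs {(a', f(a')) : a' ∈ S_d}, and in particular f(a_t) = b_t holds with probability 1. -/

import Mathlib

/-!
For `a ∈ S_{d-1}` the first branch of `g` never fires, since `f a = b₀ = f a₀` with `a ≠ a₀`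
contradicts injectivity; and `f(r_{a₀}(a)) ≠ b₀`, so
`r_{b₀}(g(a)) = r_{b₀}(r_{b₀}⁻¹(f(r_{a₀}(a)))) = f(r_{a₀}(a))`. Thus every outcome is a pair
`(a', f(a'))`, and it remains to see that `a_t` is uniform: `r_{a₀}` is a bijection
`S_{d-1} → S_d \ {a₀}`, so `P(a_t = a₀) = 1/d` and `P(a_t = c) = (1 - 1/d)/(d - 1) = 1/d`
for `c ≠ a₀`.
-/

open Finset

/-- `redirect (d-1) c` is the map `r_c` and `restore (d-1) c` its inverse `r_c⁻¹`. -/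
def redirect (n c a : ℕ) : ℕ := if a = c then n else a

def restore (n c b : ℕ) : ℕ := if b = n then c else b

/-- The index `g(a)` of the construction, with `b₀ = f a₀`. -/
def correlatedIndex (n : ℕ) (f : ℕ → ℕ) (a0 a : ℕ) : ℕ :=
  if f a = f a0 ∧ a ≠ a0 then restore n (f a0) (f a0) else restore n (f a0) (f (redirect n a0 a))

section Redirect

variable {n c a : ℕ}

theorem redirect_ne (ha : a < n) : redirect n c a ≠ c := by
  unfold redirect; split_ifs <;> omega

theorem redirect_le (ha : a < n) : redirect n c a ≤ n := by
  unfold redirect; split_ifs <;> omega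

theorem redirect_restore {y : ℕ} (hy : y ≠ c) : redirect n c (restore n c y) = y := by
  unfold redirect restore; split_ifs <;> omega

theorem card_filter_redirect_eq {c' : ℕ} (hc : c ≤ n) (hc' : c' ≤ n) :
    #{a ∈ range n | redirect n c a = c'} = if c = c' then 0 else 1 := by
  split_ifs with h
  · subst h
    exact card_eq_zero.2 (filter_eq_empty_iff.2 fun a ha => redirect_ne (mem_range.1 ha))
  · refine card_eq_one.2 ⟨restore n c c', ?_⟩
    ext a
    simp only [mem_filter, mem_range, mem_singleton]
    unfold redirect restore
    split_ifs <;> omega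

end Redirect

theorem redirect_correlatedIndex {d a0 a : ℕ} {f : ℕ → ℕ} (hf : Set.InjOn f (Set.Iio d))
    (ha0 : a0 < d) (ha : a < d - 1) :
    redirect (d - 1) (f a0) (correlatedIndex (d - 1) f a0 a) = f (redirect (d - 1) a0 a) := by
  have hra : redirect (d - 1) a0 a < d := by have := redirect_le (c := a0) ha; omega
  have hfa : ¬ (f a = f a0 ∧ a ≠ a0) := fun h => h.2 (hf (by simp; omega) ha0 h.1)
  have hfra : f (redirect (d - 1) a0 a) ≠ f a0 := fun h => redirect_ne ha (hf hra ha0 h)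
  rw [correlatedIndex, if_neg hfa, redirect_restore hfra]

theorem sum_redirect_mixture {d a0 c : ℕ} (hd : 1 < d) (ha0 : a0 < d) (hc : c < d) :
    ∑ a ∈ range (d - 1), 1 / ((d : ℝ) - 1) * (1 / d * (if a0 = c then 1 else 0) +
      (1 - 1 / d) * (if redirect (d - 1) a0 a = c then 1 else 0)) = 1 / d := by
  have hd1 : (d : ℝ) - 1 ≠ 0 := sub_ne_zero.2 (by exact_mod_cast hd.ne')
  rw [← mul_sum, sum_add_distrib, sum_const, ← mul_sum, sum_boole,
    card_filter_redirect_eq (by omega) (by omega), card_range, nsmul_eq_mul,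
    Nat.cast_pred (by omega)]
  split_ifs <;> field_simp <;> ring

theorem correct_round_simulates_general (d : ℕ) (hd : 2 < d)
    (f : ℕ → ℕ) (hf : Set.BijOn f (Set.Iio d) (Set.Iio d))
    (a0 b0 : ℕ) (ha0 : a0 < d) (hcorr : f a0 = b0)
    (r : ℕ → ℕ → ℕ) (hr : ∀ c a, r c a = if a = c then d - 1 else a)
    (rinv : ℕ → ℕ → ℕ) (hrinv : ∀ c b, rinv c b = if b = d - 1 then c else b)
    (g : ℕ → ℕ)
    (hg : ∀ a, g a = if f a = b0 ∧ a ≠ a0 then rinv b0 (f a0)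
                     else rinv b0 (f (r a0 a)))
    (a_t b_t : Bool → ℕ → ℕ)
    (hat : ∀ s a, a_t s a = if s then r a0 a else a0)
    (hbt : ∀ s a, b_t s a = if s then r b0 (g a) else b0)
    (w : Bool → ℝ) (hw0 : w false = 1 / (d : ℝ)) (hw1 : w true = 1 - 1 / (d : ℝ)) :
    (∀ c < d, (∑ a ∈ Finset.range (d - 1), (1 / ((d : ℝ) - 1)) *
        (w false * (if a_t false a = c ∧ b_t false a = f c then 1 else 0) +
         w true * (if a_t true a = c ∧ b_t true a = f c then 1 else 0))) = 1 / (d : ℝ)) ∧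
    (∑ a ∈ Finset.range (d - 1), (1 / ((d : ℝ) - 1)) *
        (w false * (if f (a_t false a) = b_t false a then 1 else 0) +
         w true * (if f (a_t true a) = b_t true a then 1 else 0))) = 1 := by
  subst hcorr
  obtain rfl : r = redirect (d - 1) := funext₂ hr
  obtain rfl : rinv = restore (d - 1) := funext₂ hrinv
  obtain rfl : g = correlatedIndex (d - 1) f a0 := funext hg
  have hbt_eq : ∀ s, ∀ a ∈ range (d - 1), b_t s a = f (a_t s a) := by
    rintro (_ | _) a ha
    · simp [hat, hbt]
    · simp [hat, hbt, redirect_correlatedIndex hf.injOn ha0 (mem_range.1 ha)]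
  constructor
  · intro c hc
    rw [← sum_redirect_mixture (by omega) ha0 hc, ← hw1, ← hw0]
    refine sum_congr rfl fun a ha => ?_
    have hpair : ∀ x, (x = c ∧ f x = f c) ↔ x = c := fun x => and_iff_left_of_imp (congrArg f)
    simp [hbt_eq _ a ha, hat, hpair]
  · have hd1 : (d : ℝ) - 1 ≠ 0 := sub_ne_zero.2 (by exact_mod_cast (show 1 < d by omega).ne')
    calc _ = ∑ a ∈ range (d - 1), 1 / ((d : ℝ) - 1) :=
          sum_congr rfl fun a ha => by simp [hbt_eq _ a ha, hw0, hw1]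
      _ = 1 := by rw [sum_const, card_range, nsmul_eq_mul, Nat.cast_pred (by omega)]; field_simp

/-- Correctly-correlated round: if `f(a₀) = b₀`, `a` is uniform on `{0,...,d-2}`
and `s` is an independent bit with `P(s=0)=1/d`, then the outputs
`(a_t, b_t)` are uniform over the `d` pairs `{(c, f(c)) : c < d}`, and in
particular `f(a_t) = b_t` with probability `1`. -/
theorem correct_round_simulates (d : ℕ) (hd : 2 < d)
    (f : ℕ → ℕ) (hf : Set.BijOn f (Set.Iio d) (Set.Iio d))
    (a0 b0 : ℕ) (ha0 : a0 < d) (hb0 : b0 < d) (hcorr : f a0 = b0)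
    (r : ℕ → ℕ → ℕ) (hr : ∀ c a, r c a = if a = c then d - 1 else a)
    (rinv : ℕ → ℕ → ℕ) (hrinv : ∀ c b, rinv c b = if b = d - 1 then c else b)
    (g : ℕ → ℕ)
    (hg : ∀ a, g a = if f a = b0 ∧ a ≠ a0 then rinv b0 (f a0)
                     else rinv b0 (f (r a0 a)))
    (a_t b_t : Bool → ℕ → ℕ)
    (hat : ∀ s a, a_t s a = if s then r a0 a else a0)
    (hbt : ∀ s a, b_t s a = if s then r b0 (g a) else b0)
    (w : Bool → ℝ) (hw0 : w false = 1 / (d : ℝ)) (hw1 : w true = 1 - 1 / (d : ℝ)) :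
    (∀ c < d, (∑ a ∈ Finset.range (d - 1), (1 / ((d : ℝ) - 1)) *
        (w false * (if a_t false a = c ∧ b_t false a = f c then 1 else 0) +
         w true * (if a_t true a = c ∧ b_t true a = f c then 1 else 0))) = 1 / (d : ℝ)) ∧
    (∑ a ∈ Finset.range (d - 1), (1 / ((d : ℝ) - 1)) *
        (w false * (if f (a_t false a) = b_t false a then 1 else 0) +
         w true * (if f (a_t true a) = b_t true a then 1 else 0))) = 1 :=
  correct_round_simulates_general d hd f hf a0 b0 ha0 hcorr r hr rinv hrinv g hg a_t b_t hat hbt w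
    hw0 hw1
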